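/- Let ℋ be a complex Hilbert space, H a bounded non-negative self-adjoint operator on ℋ, 𝔥 ⊆ ℋ a closed subspace with orthogonal projection P onto 𝔥, and K the compression of H to 𝔥. Let φ : [0,∞) → ℂ be a continuous admissible function. Then for every f ∈ 𝔥 and every t₀ > 0, (P φ((t/n)H) P)^n f → exp(−itK) f as n → ∞, uniformly in t ∈ [0, t₀]; here P φ(τH) P denotes the operator f ↦ P(φ(τH)f) on 𝔥 and φ(τH) is given by the continuous functional calculus. -/

import Mathlib

open Filter Topology

set_option maxHeartbeats 1000000
set_option synthInstance.maxHeartbeats 400000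

open NormedSpace Nat in
private lemma zeno_exp_tail {𝔥 : Type*} [NormedAddCommGroup 𝔥] [InnerProductSpace ℂ 𝔥]
    [CompleteSpace 𝔥] (A : 𝔥 →L[ℂ] 𝔥) (h : ‖A‖ ≤ 1) :
    ‖exp A - 1 - A‖ ≤ ‖A‖ ^ 2 * Real.exp 1 := by
  have hsum : Summable fun n : ℕ => ((n ! : ℂ))⁻¹ • A ^ n := expSeries_summable' A
  have key : exp A - 1 - A = ∑' k : ℕ, (((k + 2)! : ℂ))⁻¹ • A ^ (k + 2) := by
    have := Summable.sum_add_tsum_nat_add 2 hsum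
    rw [exp_eq_tsum ℂ]
    simp only []
    rw [← this]
    simp [Finset.sum_range_succ]
    abel
  rw [key]
  have hb : ∀ k : ℕ, ‖(((k + 2)! : ℂ))⁻¹ • A ^ (k + 2)‖ ≤ ‖A‖ ^ 2 * ((k ! : ℝ))⁻¹ := by
    intro k
    rw [norm_smul]
    have h1 : ‖(((k + 2)! : ℂ))⁻¹‖ = ((k + 2)! : ℝ)⁻¹ := by
      rw [norm_inv]; norm_cast
    rw [h1]
    have h2 : ‖A ^ (k + 2)‖ ≤ ‖A‖ ^ (k + 2) := norm_pow_le' A (by omega)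
    have h3 : ‖A‖ ^ (k + 2) ≤ ‖A‖ ^ 2 := by
      calc ‖A‖ ^ (k + 2) = ‖A‖ ^ 2 * ‖A‖ ^ k := by ring
      _ ≤ ‖A‖ ^ 2 * 1 := by
          gcongr
          exact pow_le_one₀ (norm_nonneg _) h
      _ = ‖A‖ ^ 2 := mul_one _
    have h4 : ((k + 2)! : ℝ)⁻¹ ≤ (k ! : ℝ)⁻¹ := by
      apply inv_anti₀
      · exact_mod_cast Nat.factorial_pos k
      · exact_mod_cast Nat.factorial_le (by omega)
    calc ((k+2)! : ℝ)⁻¹ * ‖A ^ (k+2)‖ ≤ (k ! : ℝ)⁻¹ * ‖A‖ ^ 2 := by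
          apply mul_le_mul h4 (h2.trans h3) (norm_nonneg _) (by positivity)
      _ = ‖A‖ ^ 2 * ((k ! : ℝ))⁻¹ := by ring
  have hsum2 : Summable fun k : ℕ => ‖A‖ ^ 2 * ((k ! : ℝ))⁻¹ := by
    apply Summable.mul_left
    simpa using Real.summable_pow_div_factorial 1
  calc ‖∑' k : ℕ, (((k + 2)! : ℂ))⁻¹ • A ^ (k + 2)‖
      ≤ ∑' k : ℕ, ‖A‖ ^ 2 * ((k ! : ℝ))⁻¹ := by
        apply tsum_of_norm_bounded hsum2.hasSum hb
    _ = ‖A‖ ^ 2 * ∑' k : ℕ, ((k ! : ℝ))⁻¹ := tsum_mul_left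
    _ ≤ ‖A‖ ^ 2 * Real.exp 1 := by
        gcongr
        rw [Real.exp_eq_exp_ℝ, exp_eq_tsum ℝ]
        apply le_of_eq
        congr 1
        funext n
        simp

open NormedSpace in
private lemma zeno_exp_contraction {𝔥 : Type*} [NormedAddCommGroup 𝔥] [InnerProductSpace ℂ 𝔥]
    [CompleteSpace 𝔥] (K : 𝔥 →L[ℂ] 𝔥) (hK : IsSelfAdjoint K) (τ : ℝ) :
    ‖exp ((-(Complex.I * (τ:ℂ))) • K)‖ ≤ 1 := by
  set A := (-(Complex.I * (τ:ℂ))) • K with hA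
  have hstar : star A = -A := by
    rw [hA, star_smul, hK.star_eq, ← neg_smul]
    congr 1
    simp [Complex.ext_iff]
  have h1 : star (exp A) * exp A = 1 := by
    letI : NormedAlgebra ℚ (𝔥 →L[ℂ] 𝔥) := NormedAlgebra.restrictScalars ℚ ℂ _
    rw [star_exp, hstar, ← exp_add_of_commute (Commute.neg_left rfl)]
    simp
  have h2 : ‖star (exp A) * exp A‖ = ‖exp A‖ * ‖exp A‖ := CStarRing.norm_star_mul_self
  have h3 : ‖(1 : 𝔥 →L[ℂ] 𝔥)‖ ≤ 1 := ContinuousLinearMap.norm_id_le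
  rw [h1] at h2
  nlinarith [norm_nonneg (exp A)]

private lemma zeno_pow_sub_pow {𝔥 : Type*} [NormedAddCommGroup 𝔥] [InnerProductSpace ℂ 𝔥]
    [CompleteSpace 𝔥] (A B : 𝔥 →L[ℂ] 𝔥) (hA : ‖A‖ ≤ 1) (hB : ‖B‖ ≤ 1) (n : ℕ) :
    ‖A ^ n - B ^ n‖ ≤ n * ‖A - B‖ := by
  induction n with
  | zero => simp
  | succ n ih =>
    have hBn : ‖B ^ n‖ ≤ 1 := by
      rcases Nat.eq_zero_or_pos n with h0 | h0
      · subst h0; rw [pow_zero]; exact ContinuousLinearMap.norm_id_le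
      · exact (norm_pow_le' B h0).trans (pow_le_one₀ (norm_nonneg _) hB)
    have e : A ^ (n+1) - B ^ (n+1) = A * (A ^ n - B ^ n) + (A - B) * B ^ n := by
      rw [pow_succ', pow_succ']
      noncomm_ring
    calc ‖A ^ (n+1) - B ^ (n+1)‖
        ≤ ‖A * (A ^ n - B ^ n)‖ + ‖(A - B) * B ^ n‖ := e ▸ norm_add_le _ _
      _ ≤ ‖A‖ * ‖A ^ n - B ^ n‖ + ‖A - B‖ * ‖B ^ n‖ :=
          add_le_add (norm_mul_le _ _) (norm_mul_le _ _)
      _ ≤ 1 * (n * ‖A - B‖) + ‖A - B‖ * 1 := by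
          apply add_le_add
          · exact mul_le_mul hA ih (norm_nonneg _) zero_le_one
          · exact mul_le_mul_of_nonneg_left hBn (norm_nonneg _)
      _ = (n + 1 : ℕ) * ‖A - B‖ := by push_cast; ring

/-- **Theorem 3.1** (bounded case). The closed subspace `𝔥 ⊆ ℋ` is modelled by a Hilbert
space `𝔥` with a linear isometric embedding `J : 𝔥 → ℋ`; `P = J*` is the orthogonal
projection onto `𝔥`, characterized by `⟪P g, f⟫ = ⟪g, J f⟫`. For a bounded non-negative
self-adjoint `H`, the compression `K = P H J`, and a continuous admissible function `φ`,
one has `(P φ((t/n)H) P)ⁿ f → exp(-itK) f` as `n → ∞`, uniformly in `t ∈ [0, t₀]`. -/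
theorem zeno_product_formula_admissible
    {ℋ : Type*} [NormedAddCommGroup ℋ] [InnerProductSpace ℂ ℋ] [CompleteSpace ℋ]
    {𝔥 : Type*} [NormedAddCommGroup 𝔥] [InnerProductSpace ℂ 𝔥] [CompleteSpace 𝔥]
    (J : 𝔥 →ₗᵢ[ℂ] ℋ) (P : ℋ →L[ℂ] 𝔥)
    (hP : ∀ (g : ℋ) (f : 𝔥), (inner ℂ (P g) f : ℂ) = inner ℂ g (J f))
    (Hop : ℋ →L[ℂ] ℋ) (hsa : IsSelfAdjoint Hop)
    (hpos : ∀ g : ℋ, 0 ≤ (inner ℂ (Hop g) g : ℂ).re)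
    (K : 𝔥 →L[ℂ] 𝔥) (hK : ∀ f : 𝔥, K f = P (Hop (J f)))
    (φ : ℝ → ℂ) (hφc : Continuous φ)
    (hφb : ∀ x : ℝ, 0 ≤ x → ‖φ x‖ ≤ 1) (hφ0 : φ 0 = 1)
    (hφd : Tendsto (fun x : ℝ => (φ x - 1) / (x : ℂ)) (𝓝[>] 0) (𝓝 (-Complex.I)))
    (F : ℝ → (𝔥 →L[ℂ] 𝔥))
    (hF : ∀ (τ : ℝ) (f : 𝔥),
      F τ f = P (cfc (fun z : ℂ => φ (τ * z.re)) Hop (J f))) :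
    ∀ f : 𝔥, ∀ t₀ : ℝ, 0 < t₀ →
      TendstoUniformlyOn (fun (n : ℕ) (t : ℝ) => ((F (t / n)) ^ n) f)
        (fun t : ℝ => NormedSpace.exp ((-(Complex.I * (t : ℂ))) • K) f)
        atTop (Set.Icc 0 t₀) := by
  intro f t₀ ht₀
  rcases subsingleton_or_nontrivial ℋ with hTriv | hNontriv
  · haveI : Subsingleton 𝔥 := J.injective.subsingleton
    rw [Metric.tendstoUniformlyOn_iff]
    intro ε hε
    filter_upwards with n t ht
    calc dist (NormedSpace.exp ((-(Complex.I * (t : ℂ))) • K) f) (((F (t / n)) ^ n) f)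
        = dist (((F (t / n)) ^ n) f) (((F (t / n)) ^ n) f) := by
          rw [Subsingleton.elim (NormedSpace.exp ((-(Complex.I * (t : ℂ))) • K) f)
            (((F (t / n)) ^ n) f)]
      _ = 0 := dist_self _
      _ < ε := hε
  -- Main case
  haveI : IsStarNormal Hop := hsa.isStarNormal
  set M := ‖Hop‖ with hM
  have hM0 : 0 ≤ M := norm_nonneg _
  -- spectrum facts
  have hHpos : Hop.IsPositive := by
    refine ⟨ContinuousLinearMap.isSelfAdjoint_iff_isSymmetric.mp hsa, fun x => ?_⟩
    simpa [ContinuousLinearMap.reApplyInnerSelf] using hpos x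
  have hspec : ∀ z ∈ spectrum ℂ Hop, z = (z.re : ℂ) ∧ 0 ≤ z.re ∧ z.re ≤ M := by
    intro z hz
    have h1 : z = (z.re : ℂ) := hsa.mem_spectrum_eq_re hz
    have h2 : z.re ∈ spectrum ℝ Hop := by
      rw [← spectrum.algebraMap_mem_iff ℂ]
      simpa [Complex.coe_algebraMap] using h1 ▸ hz
    have h3 : 0 ≤ z.re :=
      SpectrumRestricts.nnreal_iff.mp hHpos.spectrumRestricts z.re h2
    have h4 : z.re ≤ M := by
      calc z.re ≤ |z.re| := le_abs_self _
        _ ≤ ‖z‖ := Complex.abs_re_le_norm z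
        _ ≤ M := by
            exact spectrum.norm_le_norm_of_mem hz
    exact ⟨h1, h3, h4⟩
  -- projection and isometry facts
  have hPn : ∀ g : ℋ, ‖P g‖ ≤ ‖g‖ := by
    intro g
    have h1 : (inner ℂ (P g) (P g) : ℂ) = inner ℂ g (J (P g)) := hP g (P g)
    have h2 : ‖(inner ℂ (P g) (P g) : ℂ)‖ = ‖P g‖ * ‖P g‖ := by
      rw [inner_self_eq_norm_sq_to_K]
      rw [norm_pow]
      simp [sq]
    have h3 : ‖(inner ℂ g (J (P g)) : ℂ)‖ ≤ ‖g‖ * ‖P g‖ := by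
      calc ‖(inner ℂ g (J (P g)) : ℂ)‖ ≤ ‖g‖ * ‖J (P g)‖ := norm_inner_le_norm _ _
        _ = ‖g‖ * ‖P g‖ := by rw [J.norm_map]
    rw [h1] at h2
    rcases eq_or_lt_of_le (norm_nonneg (P g)) with h0 | h0
    · rw [← h0]; exact norm_nonneg _
    · have := h2 ▸ h3
      exact le_of_mul_le_mul_right (by linarith [h2.symm.trans_le h3]) h0
  have hPJ : ∀ f' : 𝔥, P (J f') = f' := by
    intro f'
    apply ext_inner_right ℂ
    intro v
    rw [hP (J f') v, J.inner_map_map]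
  -- K is self-adjoint
  have hKsa : IsSelfAdjoint K := by
    rw [ContinuousLinearMap.isSelfAdjoint_iff_isSymmetric]
    intro x y
    have hsym := ContinuousLinearMap.isSelfAdjoint_iff_isSymmetric.mp hsa
    calc (inner ℂ (K x) y : ℂ) = inner ℂ (P (Hop (J x))) y := by rw [hK]
      _ = inner ℂ (Hop (J x)) (J y) := hP _ _
      _ = inner ℂ (J x) (Hop (J y)) := hsym (J x) (J y)
      _ = (starRingEnd ℂ) (inner ℂ (Hop (J y)) (J x)) := (inner_conj_symm _ _).symm
      _ = (starRingEnd ℂ) (inner ℂ (P (Hop (J y))) x) := by rw [hP]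
      _ = (starRingEnd ℂ) (inner ℂ (K y) x) := by rw [hK]
      _ = inner ℂ x (K y) := inner_conj_symm _ _
  -- remainder function
  set g : ℝ → ℂ → ℂ := fun τ z => φ (τ * z.re) - 1 + Complex.I * (τ : ℂ) * z with hg
  have hgcont : ∀ τ : ℝ, ContinuousOn (g τ) (spectrum ℂ Hop) := by
    intro τ
    apply Continuous.continuousOn
    exact ((hφc.comp (continuous_const.mul Complex.continuous_re)).sub continuous_const).add
      (continuous_const.mul continuous_id)
  have hφτcont : ∀ τ : ℝ, ContinuousOn (fun z : ℂ => φ (τ * z.re)) (spectrum ℂ Hop) :=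
    fun τ => (hφc.comp (continuous_const.mul Complex.continuous_re)).continuousOn
  -- cfc decomposition
  have hdecomp : ∀ τ : ℝ, cfc (fun z : ℂ => φ (τ * z.re)) Hop
      = 1 + (-(Complex.I * (τ : ℂ))) • Hop + cfc (g τ) Hop := by
    intro τ
    have step1 : cfc (fun z : ℂ => φ (τ * z.re)) Hop
        = cfc (fun z : ℂ => ((1 : ℂ) + (-(Complex.I * (τ : ℂ))) * z) + g τ z) Hop := by
      apply cfc_congr
      intro z hz
      simp only [hg]
      ring
    rw [step1]
    rw [cfc_add Hop _ _ (by
      apply Continuous.continuousOn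
      exact continuous_const.add (continuous_const.mul continuous_id)) (hgcont τ)]
    rw [cfc_add Hop _ _ continuousOn_const (by
      apply Continuous.continuousOn
      exact continuous_const.mul continuous_id)]
    rw [cfc_const _ _, cfc_const_mul_id _ Hop, map_one]
  have hFlin : ∀ (τ : ℝ) (f' : 𝔥),
      F τ f' = f' + (-(Complex.I * (τ : ℂ))) • K f' + P (cfc (g τ) Hop (J f')) := by
    intro τ f'
    rw [hF τ f', hdecomp τ]
    simp only [ContinuousLinearMap.add_apply, ContinuousLinearMap.smul_apply,
      ContinuousLinearMap.one_apply, map_add, map_smul]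
    rw [hPJ, ← hK]
  -- operator D
  set D : ℝ → (𝔥 →L[ℂ] 𝔥) := fun τ => NormedSpace.exp ((-(Complex.I * (τ : ℂ))) • K) with hD
  have hDcontr : ∀ τ : ℝ, ‖D τ‖ ≤ 1 := fun τ => zeno_exp_contraction K hKsa τ
  -- contraction property of F τ for τ ≥ 0
  have hFcontr : ∀ τ : ℝ, 0 ≤ τ → ‖F τ‖ ≤ 1 := by
    intro τ hτ
    apply ContinuousLinearMap.opNorm_le_bound _ zero_le_one
    intro f'
    rw [hF τ f', one_mul]
    have hcfc : ‖cfc (fun z : ℂ => φ (τ * z.re)) Hop‖ ≤ 1 := by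
      apply norm_cfc_le zero_le_one
      intro z hz
      obtain ⟨-, h2, -⟩ := hspec z hz
      exact hφb _ (mul_nonneg hτ h2)
    calc ‖P (cfc (fun z : ℂ => φ (τ * z.re)) Hop (J f'))‖
        ≤ ‖cfc (fun z : ℂ => φ (τ * z.re)) Hop (J f')‖ := hPn _
      _ ≤ ‖cfc (fun z : ℂ => φ (τ * z.re)) Hop‖ * ‖J f'‖ := ContinuousLinearMap.le_opNorm _ _
      _ ≤ 1 * ‖J f'‖ := by gcongr
      _ = ‖f'‖ := by rw [one_mul, J.norm_map]
  -- operator norm bound on F τ - D τ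
  have hFD : ∀ τ : ℝ, 0 ≤ τ → τ * ‖K‖ ≤ 1 →
      ‖F τ - D τ‖ ≤ ‖cfc (g τ) Hop‖ + (τ * ‖K‖) ^ 2 * Real.exp 1 := by
    intro τ hτ hτK
    have hAn : ‖(-(Complex.I * (τ : ℂ))) • K‖ = τ * ‖K‖ := by
      rw [norm_smul]
      simp [abs_of_nonneg hτ]
    have hexp := zeno_exp_tail ((-(Complex.I * (τ : ℂ))) • K) (by rw [hAn]; exact hτK)
    rw [hAn] at hexp
    apply ContinuousLinearMap.opNorm_le_bound _ (by positivity)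
    intro f'
    have expand : (F τ - D τ) f'
        = P (cfc (g τ) Hop (J f'))
          - (NormedSpace.exp ((-(Complex.I * (τ : ℂ))) • K) - 1
              - (-(Complex.I * (τ : ℂ))) • K) f' := by
      simp only [ContinuousLinearMap.sub_apply, ContinuousLinearMap.smul_apply,
        ContinuousLinearMap.one_apply, hD]
      rw [hFlin τ f']
      abel
    rw [expand]
    calc ‖P (cfc (g τ) Hop (J f'))
          - (NormedSpace.exp ((-(Complex.I * (τ : ℂ))) • K) - 1
              - (-(Complex.I * (τ : ℂ))) • K) f'‖
        ≤ ‖P (cfc (g τ) Hop (J f'))‖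
          + ‖(NormedSpace.exp ((-(Complex.I * (τ : ℂ))) • K) - 1
              - (-(Complex.I * (τ : ℂ))) • K) f'‖ := norm_sub_le _ _
      _ ≤ ‖cfc (g τ) Hop‖ * ‖f'‖ + (τ * ‖K‖) ^ 2 * Real.exp 1 * ‖f'‖ := by
          apply add_le_add
          · calc ‖P (cfc (g τ) Hop (J f'))‖ ≤ ‖cfc (g τ) Hop (J f')‖ := hPn _
              _ ≤ ‖cfc (g τ) Hop‖ * ‖J f'‖ := ContinuousLinearMap.le_opNorm _ _
              _ = ‖cfc (g τ) Hop‖ * ‖f'‖ := by rw [J.norm_map]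
          · calc ‖(NormedSpace.exp ((-(Complex.I * (τ : ℂ))) • K) - 1
                  - (-(Complex.I * (τ : ℂ))) • K) f'‖
                ≤ ‖NormedSpace.exp ((-(Complex.I * (τ : ℂ))) • K) - 1
                  - (-(Complex.I * (τ : ℂ))) • K‖ * ‖f'‖ := ContinuousLinearMap.le_opNorm _ _
              _ ≤ (τ * ‖K‖) ^ 2 * Real.exp 1 * ‖f'‖ := by gcongr
      _ = (‖cfc (g τ) Hop‖ + (τ * ‖K‖) ^ 2 * Real.exp 1) * ‖f'‖ := by ring
  -- the n-th power of D at t/n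
  have hDpow : ∀ (n : ℕ), 1 ≤ n → ∀ t : ℝ,
      (D (t / n)) ^ n = NormedSpace.exp ((-(Complex.I * (t : ℂ))) • K) := by
    intro n hn t
    have hn0 : (n : ℂ) ≠ 0 := Nat.cast_ne_zero.mpr (by omega)
    rw [hD]
    letI : NormedAlgebra ℚ (𝔥 →L[ℂ] 𝔥) := NormedAlgebra.restrictScalars ℚ ℂ _
    rw [← NormedSpace.exp_nsmul]
    congr 1
    rw [← Nat.cast_smul_eq_nsmul ℂ, smul_smul]
    congr 1
    push_cast
    field_simp
  -- start the uniform convergence argument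
  rw [Metric.tendstoUniformlyOn_iff]
  intro ε hε
  set Cf := ‖f‖ with hCf
  set CK := ‖K‖ with hCK
  have hCK0 : 0 ≤ CK := norm_nonneg _
  have hCf0 : 0 ≤ Cf := norm_nonneg _
  set ε' := ε / (2 * (t₀ + 1) * (Cf + 1)) with hε'
  have hε'pos : 0 < ε' := by positivity
  -- δ from the admissibility condition
  have hball : (fun s : ℝ => (φ s - 1) / (s : ℂ)) ⁻¹' Metric.ball (-Complex.I) (ε' / (M + 1))
      ∈ 𝓝[>] (0:ℝ) :=
    hφd (Metric.ball_mem_nhds _ (by positivity))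
  obtain ⟨δ, hδpos, hδ⟩ := Metric.mem_nhdsWithin_iff.mp hball
  -- eventual index bound
  have htail : Tendsto (fun n : ℕ => t₀ ^ 2 * CK ^ 2 * Real.exp 1 * (Cf + 1) / n) atTop (𝓝 0) :=
    tendsto_const_div_atTop_nhds_zero_nat _
  have hev1 : ∀ᶠ n : ℕ in atTop, t₀ ^ 2 * CK ^ 2 * Real.exp 1 * (Cf + 1) / n < ε / 2 :=
    htail.eventually_lt_const (by positivity)
  have hev2 : ∀ᶠ n : ℕ in atTop, t₀ * (M + 1) < n * δ := by
    have := tendsto_natCast_atTop_atTop (R := ℝ)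
    filter_upwards [this.eventually_ge_atTop (t₀ * (M + 1) / δ + 1)] with n hn
    have : t₀ * (M + 1) / δ < (n : ℝ) := by linarith
    calc t₀ * (M + 1) = (t₀ * (M + 1) / δ) * δ := by field_simp
      _ < n * δ := by exact mul_lt_mul_of_pos_right this hδpos
  have hev3 : ∀ᶠ n : ℕ in atTop, t₀ * CK ≤ n :=
    tendsto_natCast_atTop_atTop.eventually_ge_atTop (t₀ * CK)
  filter_upwards [hev1, hev2, hev3, eventually_ge_atTop 1] with n hn1 hn2 hn3 hn4
  intro t ht
  obtain ⟨ht0, htt₀⟩ := ht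
  have hnR : (0 : ℝ) < n := by
    have : 0 < n := by omega
    exact_mod_cast this
  set τ := t / n with hτdef
  have hτ0 : 0 ≤ τ := div_nonneg ht0 hnR.le
  have hnτ : (n : ℝ) * τ = t := by
    rw [hτdef]
    field_simp
  have hτle : τ ≤ t₀ / n := by
    rw [hτdef]
    rw [div_le_div_iff₀ hnR hnR]
    nlinarith
  have hτK : τ * CK ≤ 1 := by
    have : τ * CK ≤ (t₀ / n) * CK := mul_le_mul_of_nonneg_right hτle hCK0
    have h2 : (t₀ / n) * CK ≤ 1 := by
      rw [div_mul_eq_mul_div, div_le_one hnR]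
      exact hn3
    linarith
  -- cfc remainder bound
  have hgb : ‖cfc (g τ) Hop‖ ≤ ε' * τ := by
    apply norm_cfc_le (by positivity)
    intro z hz
    obtain ⟨hzre, hznn, hzM⟩ := hspec z hz
    obtain ⟨x, rfl⟩ : ∃ x : ℝ, z = (x : ℂ) := ⟨z.re, hzre⟩
    simp only [Complex.ofReal_re] at hznn hzM
    by_cases hs0 : τ * x = 0
    · have hzero : φ (τ * x) - 1 + Complex.I * (τ : ℂ) * (x : ℂ) = 0 := by
        have hcast : (τ : ℂ) * (x : ℂ) = ((τ * x : ℝ) : ℂ) := by push_cast; ring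
        rw [hs0, hφ0, mul_assoc, hcast, hs0]
        simp
      simp only [hg, Complex.ofReal_re]
      rw [hzero]
      simp only [norm_zero]
      positivity
    · have hspos : 0 < τ * x := lt_of_le_of_ne (mul_nonneg hτ0 hznn) (Ne.symm hs0)
      have hsδ : τ * x < δ := by
        calc τ * x ≤ (t₀ / n) * M := by
              apply mul_le_mul hτle hzM hznn (div_nonneg ht₀.le hnR.le)
          _ < (t₀ / n) * (M + 1) := by
              apply mul_lt_mul_of_pos_left (by linarith) (div_pos ht₀ hnR)
          _ < δ := by
              rw [div_mul_eq_mul_div, div_lt_iff₀ hnR]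
              linarith [hn2]
      have hmem : τ * x ∈ Metric.ball (0:ℝ) δ ∩ Set.Ioi 0 :=
        ⟨by
          rw [Metric.mem_ball, Real.dist_eq, sub_zero, abs_of_pos hspos]
          exact hsδ, hspos⟩
      have hsmall := hδ hmem
      rw [Set.mem_preimage, Metric.mem_ball, dist_eq_norm] at hsmall
      have hsC : ((τ * x : ℝ) : ℂ) ≠ 0 := by exact_mod_cast hspos.ne'
      have heq : φ (τ * x) - 1 + Complex.I * (τ : ℂ) * (x : ℂ)
          = ((φ (τ * x) - 1) / ((τ * x : ℝ) : ℂ) - (-Complex.I)) * ((τ * x : ℝ) : ℂ) := by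
        push_cast
        push_cast at hsC
        rw [sub_mul, div_mul_cancel₀ _ hsC]
        ring
      simp only [hg, Complex.ofReal_re]
      rw [heq, norm_mul]
      have hsn : ‖((τ * x : ℝ) : ℂ)‖ = τ * x := by
        rw [Complex.norm_real, Real.norm_eq_abs, abs_of_pos hspos]
      rw [hsn]
      calc ‖(φ (τ * x) - 1) / ((τ * x : ℝ) : ℂ) - (-Complex.I)‖ * (τ * x)
          ≤ (ε' / (M + 1)) * (τ * x) := by
            apply mul_le_mul_of_nonneg_right hsmall.le hspos.le
        _ ≤ (ε' / (M + 1)) * (τ * (M + 1)) := by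
            apply mul_le_mul_of_nonneg_left _ (by positivity)
            apply mul_le_mul_of_nonneg_left (by linarith) hτ0
        _ = ε' * τ := by field_simp
  -- assemble
  have hbound : ‖((F τ) ^ n) f - ((D τ) ^ n) f‖
      ≤ n * (ε' * τ + (τ * CK) ^ 2 * Real.exp 1) * Cf := by
    have h1 : ‖(F τ) ^ n - (D τ) ^ n‖ ≤ n * ‖F τ - D τ‖ :=
      zeno_pow_sub_pow _ _ (hFcontr τ hτ0) (hDcontr τ) n
    have h2 : ‖F τ - D τ‖ ≤ ε' * τ + (τ * CK) ^ 2 * Real.exp 1 := by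
      calc ‖F τ - D τ‖ ≤ ‖cfc (g τ) Hop‖ + (τ * CK) ^ 2 * Real.exp 1 := hFD τ hτ0 hτK
        _ ≤ ε' * τ + (τ * CK) ^ 2 * Real.exp 1 := by gcongr
    calc ‖((F τ) ^ n) f - ((D τ) ^ n) f‖
        = ‖((F τ) ^ n - (D τ) ^ n) f‖ := by simp [ContinuousLinearMap.sub_apply]
      _ ≤ ‖(F τ) ^ n - (D τ) ^ n‖ * Cf := ContinuousLinearMap.le_opNorm _ _
      _ ≤ (n * ‖F τ - D τ‖) * Cf := by gcongr
      _ ≤ (n * (ε' * τ + (τ * CK) ^ 2 * Real.exp 1)) * Cf := by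
          apply mul_le_mul_of_nonneg_right _ hCf0
          apply mul_le_mul_of_nonneg_left h2 (Nat.cast_nonneg n)
  have hfinal : (n : ℝ) * (ε' * τ + (τ * CK) ^ 2 * Real.exp 1) * Cf
      ≤ ε' * t₀ * Cf + t₀ ^ 2 * CK ^ 2 * Real.exp 1 * Cf / n := by
    have e1 : (n : ℝ) * (ε' * τ) = ε' * t := by rw [← hnτ]; ring
    have e2 : (n : ℝ) * ((τ * CK) ^ 2 * Real.exp 1) = t ^ 2 * CK ^ 2 * Real.exp 1 / n := by
      rw [hτdef]
      field_simp
    have expand : (n : ℝ) * (ε' * τ + (τ * CK) ^ 2 * Real.exp 1) * Cf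
        = ε' * t * Cf + t ^ 2 * CK ^ 2 * Real.exp 1 / n * Cf := by
      rw [mul_add, e1, e2, add_mul]
    rw [expand]
    apply add_le_add
    · apply mul_le_mul_of_nonneg_right _ hCf0
      exact mul_le_mul_of_nonneg_left htt₀ hε'pos.le
    · rw [div_mul_eq_mul_div]
      rw [div_le_div_iff₀ hnR hnR]
      have h2 : t ^ 2 ≤ t₀ ^ 2 := by nlinarith
      have h3 : t ^ 2 * CK ^ 2 * Real.exp 1 * Cf ≤ t₀ ^ 2 * CK ^ 2 * Real.exp 1 * Cf := by
        apply mul_le_mul_of_nonneg_right _ hCf0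
        apply mul_le_mul_of_nonneg_right _ (Real.exp_pos 1).le
        apply mul_le_mul_of_nonneg_right h2 (by positivity)
      nlinarith
  -- conclude
  rw [dist_eq_norm, norm_sub_rev]
  rw [← hDpow n hn4 t]
  calc ‖((F τ) ^ n) f - ((D τ) ^ n) f‖
      ≤ (n : ℝ) * (ε' * τ + (τ * CK) ^ 2 * Real.exp 1) * Cf := hbound
    _ ≤ ε' * t₀ * Cf + t₀ ^ 2 * CK ^ 2 * Real.exp 1 * Cf / n := hfinal
    _ < ε := by
        have h1 : ε' * t₀ * Cf ≤ ε / 2 := by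
          rw [hε']
          rw [div_mul_eq_mul_div, div_mul_eq_mul_div, div_le_iff₀ (by positivity)]
          have : ε * (t₀ * Cf) ≤ ε * ((t₀ + 1) * (Cf + 1)) := by
            apply mul_le_mul_of_nonneg_left _ hε.le
            nlinarith
          nlinarith
        have h2 : t₀ ^ 2 * CK ^ 2 * Real.exp 1 * Cf / n < ε / 2 := by
          calc t₀ ^ 2 * CK ^ 2 * Real.exp 1 * Cf / n
              ≤ t₀ ^ 2 * CK ^ 2 * Real.exp 1 * (Cf + 1) / n := by
                rw [div_le_div_iff₀ hnR hnR]
                nlinarith [Real.exp_pos 1, sq_nonneg t₀, sq_nonneg CK,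
                  mul_nonneg (mul_nonneg (mul_nonneg (sq_nonneg t₀) (sq_nonneg CK)) (Real.exp_pos 1).le) hnR.le]
            _ < ε / 2 := hn1
        linarith
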